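/- Let ρ = 2^{−m} ∏_{k=1}^m (I + i λ_k c̃_{2k−1} c̃_{2k}) be a Gaussian state in standard form, with λ_1, …, λ_m ∈ [−1, 1], c̃_j = Σ_{i=1}^{2m} R_{ij} c_i and R ∈ SO(2m,ℝ). Then ρ² = ρ (i.e., ρ is a pure state) if and only if λ_k ∈ {−1, 1} for every k. -/

import Mathlib

open Matrix Kronecker Finset
open scoped ComplexOrder

noncomputable section

/-- A Majorana family: `2*m` Hermitian `2^m × 2^m` complex matrices squaring to the
identity and pairwise anticommuting. -/
structure MajoranaFamily (m : ℕ) where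
  c : Fin (2*m) → Matrix (Fin (2^m)) (Fin (2^m)) ℂ
  herm : ∀ j, (c j).IsHermitian
  sq : ∀ j, c j * c j = 1
  anticomm : ∀ j k, j ≠ k → c j * c k = -(c k * c j)

abbrev Mat (m : ℕ) := Matrix (Fin (2^m)) (Fin (2^m)) ℂ
abbrev Mat2 (m : ℕ) := Matrix (Fin (2^m) × Fin (2^m)) (Fin (2^m) × Fin (2^m)) ℂ
abbrev MatN (m n : ℕ) := Matrix (Fin n → Fin (2^m)) (Fin n → Fin (2^m)) ℂ

variable {m : ℕ}

/-- A state: a positive semidefinite matrix of trace `1`. -/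
def IsState {ι : Type*} [Fintype ι] (ρ : Matrix ι ι ℂ) : Prop :=
  ρ.PosSemidef ∧ ρ.trace = 1

/-- The square root of a positive semidefinite matrix (removed from Mathlib; old definition). -/
def Matrix.PosSemidef.sqrt {n : Type*} [Fintype n] [DecidableEq n] {A : Matrix n n ℂ}
    (hA : A.PosSemidef) : Matrix n n ℂ :=
  hA.1.eigenvectorUnitary.1 * diagonal ((↑) ∘ (Real.sqrt ·) ∘ hA.1.eigenvalues) *
    (star hA.1.eigenvectorUnitary : Matrix n n ℂ)

/-- The trace norm `‖X‖₁ = Tr √(XᴴX)`. -/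
def traceNorm {ι : Type*} [Fintype ι] [DecidableEq ι] (X : Matrix ι ι ℂ) : ℝ :=
  ((Matrix.posSemidef_conjTranspose_mul_self X).sqrt.trace).re

/-- The rotated Majorana operators `c̃_j = Σ_i R_{ij} c_i`. -/
def tilde (F : MajoranaFamily m) (R : Matrix (Fin (2*m)) (Fin (2*m)) ℝ)
    (j : Fin (2*m)) : Mat m :=
  ∑ i, (R i j : ℂ) • F.c i

/-- Standard-form Gaussian state `2^{-m} ∏_{k=1}^m (I + i λ_k c̃_{2k-1} c̃_{2k})`
(ordered product; the factors commute). -/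
def gaussStd (F : MajoranaFamily m) (R : Matrix (Fin (2*m)) (Fin (2*m)) ℝ)
    (lam : Fin m → ℝ) : Mat m :=
  ((2:ℂ)^m)⁻¹ • (List.ofFn (fun k : Fin m =>
    (1 : Mat m) + (Complex.I * (lam k : ℂ)) •
      (tilde F R ⟨2*k.val, by omega⟩ * tilde F R ⟨2*k.val+1, by omega⟩))).prod

/-- A pure Gaussian state: a standard-form Gaussian state with all `λ_k ∈ {-1,1}`,
for some `R ∈ SO(2m,ℝ)`. -/
def IsPureGaussian (F : MajoranaFamily m) (ρ : Mat m) : Prop :=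
  ∃ (R : Matrix (Fin (2*m)) (Fin (2*m)) ℝ) (lam : Fin m → ℝ),
    Rᵀ * R = 1 ∧ R.det = 1 ∧ (∀ k, lam k = 1 ∨ lam k = -1) ∧ ρ = gaussStd F R lam

/-- A convex-Gaussian state: a finite convex combination of pure Gaussian states. -/
def IsConvexGaussian (F : MajoranaFamily m) (ρ : Mat m) : Prop :=
  ∃ (k : ℕ) (p : Fin k → ℝ) (g : Fin k → Mat m),
    (∀ i, 0 ≤ p i) ∧ (∑ i, p i) = 1 ∧ (∀ i, IsPureGaussian F (g i)) ∧
    ρ = ∑ i, p i • g i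

/-- `Λ = Σ_j c_j ⊗ c_j` on `ℂ^N ⊗ ℂ^N`. -/
def Lambda (F : MajoranaFamily m) : Mat2 m := ∑ j, F.c j ⊗ₖ F.c j

/-- Ordered product `c_{a_1} ⋯ c_{a_r}` over a finite set `S = {a_1 < … < a_r}`. -/
def majProd (F : MajoranaFamily m) (S : Finset (Fin (2*m))) : Mat m :=
  ((S.sort (· ≤ ·)).map F.c).prod

/-- An even operator: a complex linear combination of the identity and products of
an even number of distinct Majorana operators. -/
def IsEven (F : MajoranaFamily m) (X : Mat m) : Prop :=
  X ∈ Submodule.span ℂ {Y : Mat m | ∃ S : Finset (Fin (2*m)), Even S.card ∧ Y = majProd F S}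

/-- The Hermitian correlator `i^k c_{a_1} ⋯ c_{a_{2k}}` associated to a set of
cardinality `2k`. -/
def corrOp (F : MajoranaFamily m) (S : Finset (Fin (2*m))) : Mat m :=
  (Complex.I ^ (S.card / 2)) • majProd F S

/-- The operator acting as `A` on the `k`-th tensor factor of `(ℂ^N)^{⊗n}` and as the
identity on the other factors. -/
def embedAt (n : ℕ) (k : Fin n) (A : Mat m) : MatN m n :=
  fun x y => A (x k) (y k) * ∏ l ∈ Finset.univ.erase k, (if x l = y l then 1 else 0)

/-- `Λ^{k,l} = Σ_j c_j^{(k)} c_j^{(l)}` on `(ℂ^N)^{⊗n}`. -/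
def LambdaKL (F : MajoranaFamily m) (n : ℕ) (k l : Fin n) : MatN m n :=
  ∑ j, embedAt n k (F.c j) * embedAt n l (F.c j)

/-- Partial trace of an operator on `(ℂ^N)^{⊗n}` over the tensor factors `2, …, n`. -/
def ptrRest (n : ℕ) (hn : 1 ≤ n) (ρ : MatN m n) : Mat m := fun a b =>
  ∑ g : Fin (n-1) → Fin (2^m),
    ρ (fun i => if h : i.val = 0 then a else g ⟨i.val - 1, by omega⟩)
      (fun i => if h : i.val = 0 then b else g ⟨i.val - 1, by omega⟩)

/-- `ρ` has an `n`-Gaussian-symmetric extension. -/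
def HasGSExt (F : MajoranaFamily m) (n : ℕ) (hn : 1 ≤ n) (ρ : Mat m) : Prop :=
  ∃ ext : MatN m n, IsState ext ∧ ptrRest n hn ext = ρ ∧
    ∀ k l : Fin n, k ≠ l → LambdaKL F n k l * ext = 0

/-- `‖Λ‖₁ = 2(m+1) C(2m, m+1)`. -/
def lambdaNorm (m : ℕ) : ℝ := 2*(m+1) * (Nat.choose (2*m) (m+1) : ℝ)

/-- `ε(n) = min {2, 10 ‖Λ‖₁² 2^{2m} n^{-1/3}}`. -/
def epsB (m n : ℕ) : ℝ :=
  min 2 (10 * lambdaNorm m ^ 2 * 2^(2*m) / (n:ℝ) ^ ((1:ℝ)/3))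

/-- `χ(n) = (ε(n)/2) (2m)!/m!`. -/
def chiB (m n : ℕ) : ℝ :=
  epsB m n / 2 * ((Nat.factorial (2*m) : ℝ) / (Nat.factorial m : ℝ))

/-- `δ(n) = χ(n)/(1+χ(n))`. -/
def deltaB (m n : ℕ) : ℝ := chiB m n / (1 + chiB m n)

/-- The parity operator `P = i^m c_1 ⋯ c_{2m}`. -/
def parityOp (F : MajoranaFamily m) : Mat m :=
  (Complex.I ^ m) • (((List.finRange (2*m)).map F.c).prod)

/-- The operator `I^{⊗ r} ⊗ c_s ⊗ P^{⊗(n-r-1)}` on `(ℂ^N)^{⊗n}` (0-based position `r`). -/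
def dOp (F : MajoranaFamily m) (n : ℕ) (r : Fin n) (s : Fin (2*m)) : MatN m n :=
  fun x y => ∏ l : Fin n,
    if l < r then (if x l = y l then 1 else 0)
    else if l = r then F.c s (x l) (y l)
    else parityOp F (x l) (y l)

/-- The family `d_1, …, d_{2mn}`, where `d_{2m(r-1)+s} = I^{⊗(r-1)} ⊗ c_s ⊗ P^{⊗(n-r)}`. -/
def dAll (hm : 1 ≤ m) (F : MajoranaFamily m) (n : ℕ) (j : Fin (2*(m*n))) : MatN m n :=
  dOp F n
    ⟨j.val / (2*m), by
      have h1 := j.isLt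
      rw [Nat.div_lt_iff_lt_mul (by omega)]
      have h2 : n * (2*m) = 2*(m*n) := by ring
      omega⟩
    ⟨j.val % (2*m), Nat.mod_lt _ (by omega)⟩

/-- The index `2m(k-1)+j` (0-based: `2mk + j`) into a family of `2mn` Majorana operators. -/
def bigIdx (m n : ℕ) (k : Fin n) (j : Fin (2*m)) : Fin (2*(m*n)) :=
  ⟨2*m*k.val + j.val, by
    have hk : k.val + 1 ≤ n := k.isLt
    have hj := j.isLt
    have h1 : 2*m*(k.val+1) = 2*m*k.val + 2*m := by ring
    have h2 : 2*m*(k.val+1) ≤ 2*m*n := Nat.mul_le_mul le_rfl hk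
    have h3 : 2*m*n = 2*(m*n) := by ring
    omega⟩

/-- `Γ^{k,l} = Σ_{j=1}^{2m} (-1)^{m-j} e_{2m(k-1)+j} · e_{2m(l-1)+1} ⋯ ê_{2m(l-1)+j} ⋯ e_{2ml}`. -/
def GammaKL (m n : ℕ) (E : MajoranaFamily (m*n)) (k l : Fin n) :
    Matrix (Fin (2^(m*n))) (Fin (2^(m*n))) ℂ :=
  ∑ j : Fin (2*m), ((-1:ℂ) ^ ((m:ℤ) - (j.val+1 : ℤ))) •
    (E.c (bigIdx m n k j) *
      (((List.finRange (2*m)).filter (fun i => i ≠ j)).map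
        (fun i => E.c (bigIdx m n l i))).prod)

/-- `C = i^{mn} e_1 ⋯ e_{2mn}`. -/
def bigParity (m n : ℕ) (E : MajoranaFamily (m*n)) :
    Matrix (Fin (2^(m*n))) (Fin (2^(m*n))) ℂ :=
  (Complex.I ^ (m*n)) • (((List.finRange (2*(m*n))).map E.c).prod)

/-- The `n`-fold tensor power `A^{⊗n}` of a matrix on `ℂ^N`. -/
def tpow (n : ℕ) (A : Mat m) : MatN m n := fun x y => ∏ k, A (x k) (y k)

/-!
With `b_k = i c̃_{2k-1} c̃_{2k}`, the rotated operators `c̃_j` again form a Majorana family, so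
the `b_k` are pairwise commuting involutions and `ρ = ∏_k (1 + λ_k b_k)/2`. The operator
`c̃_{2k-1}` squares to `1`, anticommutes with `b_k` and commutes with every other `b_j`, so
conjugating by it shows that a product of factors `α_j + β_j b_j` over distinct `j` has trace
`2^m ∏ α_j`. Hence `tr ρ = 1` and `tr ρ² = ∏_k (1 + λ_k²)/2`, which is `1` only if every
`λ_k² = 1`. Conversely, for `λ_k = ±1` each factor is idempotent, and a product of commuting
idempotents is idempotent.
-/

open Function

theorem Finset.noncommProd_smul {ι R M : Type*} [CommMonoid R] [Monoid M] [MulAction R M]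
    [IsScalarTower R M M] [SMulCommClass R M M] (s : Finset ι) (c : ι → R) (f : ι → M)
    (comm : (s : Set ι).Pairwise (Commute on f)) :
    s.noncommProd (fun i => c i • f i)
        (comm.imp fun _ _ h => (h.smul_left _).smul_right _) =
      (∏ i ∈ s, c i) • s.noncommProd f comm := by
  induction s using Finset.cons_induction with
  | empty => simp
  | cons a s ha ih =>
    rw [noncommProd_cons, noncommProd_cons, prod_cons, ih, smul_mul_smul_comm]

theorem List.prod_ofFn_eq_noncommProd {M : Type*} [Monoid M] {n : ℕ} (f : Fin n → M)
    (comm : _root_.Pairwise (Commute on f)) :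
    (List.ofFn f).prod = univ.noncommProd f (comm.set_pairwise _) := by
  simp only [noncommProd, Fin.univ_val_map, Multiset.noncommProd_coe]

theorem Finset.isIdempotentElem_noncommProd {ι M : Type*} [Monoid M] (s : Finset ι) (f : ι → M)
    (comm : (s : Set ι).Pairwise (Commute on f)) (hf : ∀ i ∈ s, IsIdempotentElem (f i)) :
    IsIdempotentElem (s.noncommProd f comm) := by
  induction s using Finset.cons_induction with
  | empty => exact IsIdempotentElem.one
  | cons a s ha ih =>
    rw [noncommProd_cons]
    exact (hf a (mem_cons_self a s)).mul_of_commute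
      (noncommProd_commute _ _ _ _ fun i hi => comm (mem_cons_self a s)
        (mem_cons_of_mem hi) (ne_of_mem_of_not_mem hi ha).symm)
      (ih _ fun i hi => hf i (mem_cons_of_mem hi))

theorem Finset.eq_one_of_prod_eq_one_of_le_one {ι R : Type*} [CommMonoidWithZero R]
    [PartialOrder R] [ZeroLEOneClass R] [PosMulStrictMono R] [Nontrivial R] {s : Finset ι}
    {f : ι → R} (h₀ : ∀ i ∈ s, 0 < f i) (h₁ : ∀ i ∈ s, f i ≤ 1) (hprod : ∏ i ∈ s, f i = 1) :
    ∀ i ∈ s, f i = 1 := by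
  intro i hi
  by_contra hne
  have hlt := prod_lt_prod h₀ h₁ ⟨i, hi, lt_of_le_of_ne (h₁ i hi) hne⟩
  rw [hprod, prod_const_one] at hlt
  exact lt_irrefl _ hlt

theorem commute_mul_of_anticommute {A : Type*} [Ring A] {a x y : A}
    (hx : a * x = -(x * a)) (hy : a * y = -(y * a)) : Commute a (x * y) := by
  rw [Commute, SemiconjBy, ← mul_assoc, hx, neg_mul, mul_assoc, hy, mul_neg, neg_neg, mul_assoc]

theorem smul_one_add_smul_mul_self {K A : Type*} [CommRing K] [Ring A] [Algebra K A] {P : A}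
    (hP : P * P = 1) (a b : K) :
    (a • 1 + b • P) * (a • 1 + b • P) = (a ^ 2 + b ^ 2) • (1 : A) + (2 * a * b) • P := by
  simp only [add_mul, mul_add, smul_mul_smul_comm, one_mul, mul_one, hP]
  module

theorem Matrix.trace_eq_zero_of_anticommute {K n : Type*} [Field K] [NeZero (2 : K)] [Fintype n]
    [DecidableEq n] {X Y : Matrix n n K} (hX : X * X = 1) (hXY : X * Y = -(Y * X)) :
    Y.trace = 0 := by
  have h : Y.trace = -Y.trace := by
    calc Y.trace = (X * Y * X).trace := by rw [trace_mul_cycle, hX, one_mul]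
      _ = -Y.trace := by rw [hXY, neg_mul, trace_neg, mul_assoc, hX, mul_one]
  have h2 : (2 : K) * Y.trace = 0 := by linear_combination h
  exact (mul_eq_zero.mp h2).resolve_left two_ne_zero

theorem Matrix.trace_noncommProd_smul_one_add_smul {K n ι : Type*} [Field K] [NeZero (2 : K)]
    [Fintype n] [DecidableEq n] (b x : ι → Matrix n n K) (hx : ∀ k, x k * x k = 1)
    (hxb : ∀ k, x k * b k = -(b k * x k)) (hxb' : ∀ j k, j ≠ k → Commute (x k) (b j))
    (α β : ι → K) (s : Finset ι)
    (comm : (s : Set ι).Pairwise (Commute on fun k => α k • 1 + β k • b k)) :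
    (s.noncommProd (fun k => α k • 1 + β k • b k) comm).trace =
      trace (1 : Matrix n n K) * ∏ k ∈ s, α k := by
  induction s using Finset.cons_induction with
  | empty => simp
  | cons a s ha ih =>
    set P := s.noncommProd (fun k => α k • 1 + β k • b k) (comm.mono fun _ => mem_cons_of_mem)
    have hP : Commute (x a) P := noncommProd_commute _ _ _ _ fun j hj =>
      ((Commute.one_right _).smul_right _).add_right
        ((hxb' j a (ne_of_mem_of_not_mem hj ha)).smul_right _)
    have hbP : (b a * P).trace = 0 := by
      refine trace_eq_zero_of_anticommute (hx a) ?_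
      rw [← mul_assoc, hxb, neg_mul, mul_assoc, hP.eq, ← mul_assoc]
    rw [noncommProd_cons, add_mul, trace_add, smul_mul_assoc, smul_mul_assoc, one_mul,
      trace_smul, trace_smul, ih, hbP, prod_cons, smul_zero, add_zero, smul_eq_mul]
    ring

-- The paper's pair `(2k-1, 2k)` in 0-based indexing.
def pairFst (k : Fin m) : Fin (2 * m) := ⟨2 * k.val, by omega⟩

def pairSnd (k : Fin m) : Fin (2 * m) := ⟨2 * k.val + 1, by omega⟩

theorem pairFst_ne_pairSnd (j k : Fin m) : pairFst j ≠ pairSnd k := by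
  simp only [pairFst, pairSnd, ne_eq, Fin.mk.injEq]
  omega

theorem pairFst_injective : Function.Injective (pairFst (m := m)) := fun j k h => by
  simp only [pairFst, Fin.mk.injEq] at h
  omega

theorem pairSnd_injective : Function.Injective (pairSnd (m := m)) := fun j k h => by
  simp only [pairSnd, Fin.mk.injEq] at h
  omega

namespace MajoranaFamily

variable (F : MajoranaFamily m)

theorem mul_add_mul_swap (i j : Fin (2 * m)) :
    F.c i * F.c j + F.c j * F.c i = (if i = j then (2 : ℂ) else 0) • 1 := by
  by_cases h : i = j
  · rw [h, F.sq, if_pos rfl, two_smul]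
  · rw [F.anticomm i j h, neg_add_cancel, if_neg h, zero_smul]

theorem sum_smul_mul_add_mul_swap (u v : Fin (2 * m) → ℂ) :
    (∑ i, u i • F.c i) * (∑ i, v i • F.c i) + (∑ i, v i • F.c i) * (∑ i, u i • F.c i) =
      (2 * ∑ i, u i * v i) • 1 := by
  calc _ = ∑ i, ∑ j, (u i * v j) • (F.c i * F.c j + F.c j * F.c i) := by
        simp only [sum_mul_sum, smul_mul_smul_comm, smul_add, sum_add_distrib]
        rw [sum_comm (f := fun i j => (v i * u j) • (F.c i * F.c j))]
        simp only [mul_comm (v _)]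
    _ = ∑ i, (2 * (u i * v i)) • (1 : Mat m) := by
        simp only [mul_add_mul_swap, ite_smul, zero_smul, smul_ite, smul_zero, smul_smul,
          sum_ite_eq, mem_univ, if_true, mul_comm (2 : ℂ)]
    _ = _ := by rw [← sum_smul, mul_sum]

theorem isHermitian_tilde (R : Matrix (Fin (2 * m)) (Fin (2 * m)) ℝ) (j : Fin (2 * m)) :
    (tilde F R j).IsHermitian :=
  isSelfAdjoint_sum _ fun i _ => (F.herm i).smul (Complex.conj_ofReal _)

theorem tilde_mul_add_mul_swap (R : Matrix (Fin (2 * m)) (Fin (2 * m)) ℝ) (hR : Rᵀ * R = 1)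
    (j k : Fin (2 * m)) :
    tilde F R j * tilde F R k + tilde F R k * tilde F R j =
      (if j = k then (2 : ℂ) else 0) • 1 := by
  have hRjk : ∑ i, R i j * R i k = if j = k then 1 else 0 := by
    simpa [mul_apply, one_apply] using congrFun (congrFun hR j) k
  rw [tilde, tilde, F.sum_smul_mul_add_mul_swap]
  simp only [← Complex.ofReal_mul, ← Complex.ofReal_sum, hRjk]
  split_ifs <;> simp

def rotate (R : Matrix (Fin (2 * m)) (Fin (2 * m)) ℝ) (hR : Rᵀ * R = 1) : MajoranaFamily m where
  c := tilde F R
  herm := F.isHermitian_tilde R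
  sq j := by
    have h := F.tilde_mul_add_mul_swap R hR j j
    rw [if_pos rfl, ← two_smul ℂ] at h
    exact smul_right_injective _ two_ne_zero h
  anticomm j k hjk := by
    have h := F.tilde_mul_add_mul_swap R hR j k
    rw [if_neg hjk, zero_smul] at h
    exact eq_neg_of_add_eq_zero_left h

def pairOp (k : Fin m) : Mat m := Complex.I • (F.c (pairFst k) * F.c (pairSnd k))

theorem commute_c_pairOp {i : Fin (2 * m)} {k : Fin m} (h₁ : i ≠ pairFst k)
    (h₂ : i ≠ pairSnd k) : Commute (F.c i) (F.pairOp k) :=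
  (commute_mul_of_anticommute (F.anticomm _ _ h₁) (F.anticomm _ _ h₂)).smul_right _

theorem c_pairFst_mul_pairOp (k : Fin m) :
    F.c (pairFst k) * F.pairOp k = -(F.pairOp k * F.c (pairFst k)) := by
  rw [pairOp, mul_smul_comm, smul_mul_assoc, ← mul_assoc, F.sq, one_mul, mul_assoc,
    F.anticomm _ _ (pairFst_ne_pairSnd k k).symm, mul_neg, ← mul_assoc, F.sq, one_mul, smul_neg,
    neg_neg]

theorem pairOp_mul_self (k : Fin m) : F.pairOp k * F.pairOp k = 1 := by
  set x := F.c (pairFst k)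
  set y := F.c (pairSnd k)
  have hyx : y * x = -(x * y) := F.anticomm _ _ (pairFst_ne_pairSnd k k).symm
  have hxyxy : x * y * (x * y) = -1 := by
    calc x * y * (x * y) = x * (y * x) * y := by noncomm_ring
      _ = -(x * x * (y * y)) := by rw [hyx]; noncomm_ring
      _ = -1 := by rw [F.sq, F.sq, one_mul]
  rw [pairOp, smul_mul_smul_comm, Complex.I_mul_I, hxyxy, neg_one_smul, neg_neg]

theorem commute_pairOp (j k : Fin m) : Commute (F.pairOp j) (F.pairOp k) := by
  rcases eq_or_ne j k with rfl | hjk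
  · exact Commute.refl _
  refine Commute.smul_right (Commute.mul_right ?_ ?_) _
  · exact (F.commute_c_pairOp (pairFst_injective.ne hjk.symm) (pairFst_ne_pairSnd k j)).symm
  · exact (F.commute_c_pairOp (pairFst_ne_pairSnd j k).symm (pairSnd_injective.ne hjk.symm)).symm

theorem trace_noncommProd_pairOp (α β : Fin m → ℂ) (s : Finset (Fin m))
    (comm : (s : Set (Fin m)).Pairwise (Commute on fun k => α k • 1 + β k • F.pairOp k)) :
    (s.noncommProd (fun k => α k • 1 + β k • F.pairOp k) comm).trace = 2 ^ m * ∏ k ∈ s, α k := by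
  rw [trace_noncommProd_smul_one_add_smul F.pairOp (fun k => F.c (pairFst k)) (fun k => F.sq _)
    F.c_pairFst_mul_pairOp, trace_one, Fintype.card_fin, Nat.cast_pow, Nat.cast_ofNat]
  · exact fun j k hjk => F.commute_c_pairOp (pairFst_injective.ne hjk.symm) (pairFst_ne_pairSnd k j)

def pairFactor (lam : Fin m → ℝ) (k : Fin m) : Mat m :=
  (2⁻¹ : ℂ) • 1 + ((lam k : ℂ) / 2) • F.pairOp k

theorem commute_pairFactor (lam : Fin m → ℝ) (j k : Fin m) :
    Commute (F.pairFactor lam j) (F.pairFactor lam k) := by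
  refine ((Commute.one_left _).smul_left _).add_left (Commute.add_right ?_ ?_)
  · exact ((Commute.one_right _).smul_right _).smul_left _
  · exact ((F.commute_pairOp j k).smul_left _).smul_right _

theorem pairFactor_mul_self (lam : Fin m → ℝ) (k : Fin m) :
    F.pairFactor lam k * F.pairFactor lam k =
      ((1 + (lam k : ℂ) ^ 2) / 4) • 1 + ((lam k : ℂ) / 2) • F.pairOp k := by
  rw [pairFactor, smul_one_add_smul_mul_self (F.pairOp_mul_self k)]
  congr 2 <;> ring

theorem isIdempotentElem_pairFactor {lam : Fin m → ℝ} {k : Fin m} (h : lam k = 1 ∨ lam k = -1) :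
    IsIdempotentElem (F.pairFactor lam k) := by
  have hsq : (lam k : ℂ) ^ 2 = 1 := by rcases h with h | h <;> simp [h]
  rw [IsIdempotentElem, pairFactor_mul_self, hsq, pairFactor]
  norm_num

def pairState (lam : Fin m → ℝ) : Mat m :=
  univ.noncommProd (F.pairFactor lam)
    (Pairwise.set_pairwise (fun j k _ => F.commute_pairFactor lam j k) _)

theorem trace_pairState (lam : Fin m → ℝ) : (F.pairState lam).trace = 1 := by
  refine (F.trace_noncommProd_pairOp (fun _ => 2⁻¹) (fun k => lam k / 2) univ _).trans ?_
  rw [Fin.prod_const, ← mul_pow, mul_inv_cancel₀ two_ne_zero, one_pow]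

theorem trace_pairState_mul_self (lam : Fin m → ℝ) :
    (F.pairState lam * F.pairState lam).trace = ∏ k, (1 + (lam k : ℂ) ^ 2) / 2 := by
  have comm := Pairwise.set_pairwise (fun j k _ => F.commute_pairFactor lam j k)
    (univ : Finset (Fin m))
  rw [pairState, ← noncommProd_mul_distrib _ _ comm comm comm,
    noncommProd_congr (f := F.pairFactor lam * F.pairFactor lam) rfl
      fun k _ => F.pairFactor_mul_self lam k]
  refine (F.trace_noncommProd_pairOp _ _ univ _).trans ?_
  rw [← Fin.prod_const, ← prod_mul_distrib]
  congr 1 with k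
  ring

theorem pairState_mul_self_eq_iff (lam : Fin m → ℝ) (hlam : ∀ k, -1 ≤ lam k ∧ lam k ≤ 1) :
    F.pairState lam * F.pairState lam = F.pairState lam ↔ ∀ k, lam k = 1 ∨ lam k = -1 := by
  constructor
  · intro h k
    have hprod : ∏ k, (1 + lam k ^ 2) / 2 = (1 : ℝ) := by
      have htr := congrArg trace h
      rw [trace_pairState_mul_self, trace_pairState] at htr
      exact_mod_cast htr
    have hk := eq_one_of_prod_eq_one_of_le_one (fun k _ => by positivity)
      (fun k _ => by nlinarith [hlam k]) hprod k (mem_univ k)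
    have hsq : lam k ^ 2 = 1 := by linarith
    exact sq_eq_one_iff.mp hsq
  · intro h
    exact univ.isIdempotentElem_noncommProd _ _ fun k _ => F.isIdempotentElem_pairFactor (h k)

theorem gaussStd_eq_pairState (R : Matrix (Fin (2 * m)) (Fin (2 * m)) ℝ) (hR : Rᵀ * R = 1)
    (lam : Fin m → ℝ) :
    gaussStd F R lam = (F.rotate R hR).pairState lam := by
  set G := F.rotate R hR
  have hcomm : Pairwise (Commute on fun k => 1 + (lam k : ℂ) • G.pairOp k) := fun j k _ =>
    (Commute.one_left _).add_left
      ((Commute.one_right _).add_right (((G.commute_pairOp j k).smul_left _).smul_right _))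
  calc gaussStd F R lam =
        ((2 : ℂ) ^ m)⁻¹ • (List.ofFn fun k => 1 + (lam k : ℂ) • G.pairOp k).prod := by
        rw [gaussStd]
        congr 3 with k
        rw [pairOp, smul_smul, mul_comm]
        rfl
    _ = (∏ _k : Fin m, (2 : ℂ)⁻¹) • univ.noncommProd _ (hcomm.set_pairwise _) := by
        rw [List.prod_ofFn_eq_noncommProd _ hcomm, Fin.prod_const, inv_pow]
    _ = univ.noncommProd (fun k => (2 : ℂ)⁻¹ • (1 + (lam k : ℂ) • G.pairOp k)) _ :=
        (noncommProd_smul _ _ _ _).symm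
    _ = G.pairState lam := by
        refine noncommProd_congr rfl (fun k _ => ?_) _
        rw [pairFactor, smul_add, smul_smul, inv_mul_eq_div]

end MajoranaFamily

theorem stmt_15_general (m : ℕ) (F : MajoranaFamily m)
    (R : Matrix (Fin (2*m)) (Fin (2*m)) ℝ) (hR : Rᵀ * R = 1)
    (lam : Fin m → ℝ) (hlam : ∀ k, -1 ≤ lam k ∧ lam k ≤ 1) :
    gaussStd F R lam * gaussStd F R lam = gaussStd F R lam ↔
      ∀ k, lam k = 1 ∨ lam k = -1 := by
  rw [F.gaussStd_eq_pairState R hR]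
  exact (F.rotate R hR).pairState_mul_self_eq_iff lam hlam

/-- A standard-form Gaussian state is pure (`ρ² = ρ`) iff all `λ_k ∈ {-1, 1}`. -/
theorem stmt_15 (m : ℕ) (hm : 1 ≤ m) (F : MajoranaFamily m)
    (R : Matrix (Fin (2*m)) (Fin (2*m)) ℝ) (hR : Rᵀ * R = 1) (hdet : R.det = 1)
    (lam : Fin m → ℝ) (hlam : ∀ k, -1 ≤ lam k ∧ lam k ≤ 1) :
    gaussStd F R lam * gaussStd F R lam = gaussStd F R lam ↔
      ∀ k, lam k = 1 ∨ lam k = -1 :=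
  stmt_15_general m F R hR lam hlam

end
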